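/- Let Γ be a finite connected simple graph with vertex set V, let 𝒯 be a maximal tubing of Γ, and let w be its weight vector. Then for every T ∈ 𝒯 ∪ {V} with |T| ≥ 2, the total weight of T satisfies Σ_{v ∈ T} w(v) = 3^{|T|−2}. -/

import Mathlib

/-!
Every `T ∈ 𝒯 ∪ {V}` contains a vertex `v` lying in no smaller tube of `𝒯`: otherwise take a
largest proper sub-tube `S` of `T`; since `T` is connected, some edge leaves `S` inside `T`, and
the sub-tube containing its outer end can be neither nested with `S` nor separated from it.
Then `T` is the minimal element of `𝒯 ∪ {V}` containing `v`, so the recursion defining `w v`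
reads `w v = 3^(|T|-2) - ∑_{v' ∈ T, v' ≠ v} w v'`, which is the claim.
-/

variable {V : Type*} [Fintype V] [DecidableEq V]

/-- A tube of a simple graph: a nonempty proper subset of vertices whose
induced subgraph is connected. -/
def IsTube (G : SimpleGraph V) (T : Finset V) : Prop :=
  T.Nonempty ∧ T ≠ Finset.univ ∧ (G.induce (T : Set V)).Connected

/-- A tubing: a set of tubes, pairwise either properly nested or disjoint with
no edge between them. -/
def IsTubing (G : SimpleGraph V) (𝒯 : Finset (Finset V)) : Prop :=
  (∀ T ∈ 𝒯, IsTube G T) ∧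
  ∀ T ∈ 𝒯, ∀ T' ∈ 𝒯, T ≠ T' →
    T ⊂ T' ∨ T' ⊂ T ∨
      ((∀ v ∈ T, v ∉ T') ∧ ∀ u ∈ T, ∀ v ∈ T', ¬ G.Adj u v)

/-- A maximal tubing: one not properly contained in any other tubing. -/
def IsMaxTubing (G : SimpleGraph V) (𝒯 : Finset (Finset V)) : Prop :=
  IsTubing G 𝒯 ∧ ∀ 𝒯' : Finset (Finset V), IsTubing G 𝒯' → 𝒯 ⊆ 𝒯' → 𝒯' = 𝒯

/-- `w` is the weight vector of the maximal tubing `𝒯`: for each vertex `v`,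
if the minimal element `T` of `𝒯 ∪ {univ}` containing `v` is the singleton
`{v}` then `w v = 0`, and otherwise (`|T| ≥ 2`)
`w v = 3^(|T|-2) - ∑_{v' ∈ T, v' ≠ v} w v'`. -/
def IsWeightVector (𝒯 : Finset (Finset V)) (w : V → ℤ) : Prop :=
  ∀ v : V, ∀ T ∈ insert Finset.univ 𝒯, v ∈ T →
    (∀ S ∈ insert Finset.univ 𝒯, v ∈ S → T ⊆ S) →
    (T = {v} → w v = 0) ∧
    (2 ≤ T.card → w v = 3 ^ (T.card - 2) - ∑ v' ∈ T.erase v, w v')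

theorem SimpleGraph.Preconnected.exists_adj_mem_notMem_of_induce {V : Type*}
    {G : SimpleGraph V} {T S : Set V} (hT : (G.induce T).Preconnected)
    {u x : V} (huT : u ∈ T) (huS : u ∈ S) (hxT : x ∈ T) (hxS : x ∉ S) :
    ∃ a ∈ T, ∃ b ∈ T, a ∈ S ∧ b ∉ S ∧ G.Adj a b := by
  obtain ⟨p⟩ := hT ⟨u, huT⟩ ⟨x, hxT⟩
  obtain ⟨d, -, hd₁, hd₂⟩ := p.exists_boundary_dart {a : T | (a : V) ∈ S} huS hxS
  exact ⟨d.fst, d.fst.2, d.snd, d.snd.2, hd₁, hd₂, d.adj⟩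

namespace IsTubing

variable {G : SimpleGraph V} {𝒯 : Finset (Finset V)}

theorem induce_connected_of_mem_insert_univ (h𝒯 : IsTubing G 𝒯) (hG : G.Connected)
    {T : Finset V} (hT : T ∈ insert Finset.univ 𝒯) : (G.induce (T : Set V)).Connected := by
  rcases Finset.mem_insert.mp hT with rfl | hT
  · rw [Finset.coe_univ]
    exact (SimpleGraph.induceUnivIso G).connected_iff.mpr hG
  · exact (h𝒯.1 T hT).2.2

theorem exists_mem_forall_notMem_of_ssubset (h𝒯 : IsTubing G 𝒯) {T : Finset V}
    (hT : (G.induce (T : Set V)).Connected) : ∃ v ∈ T, ∀ S ∈ 𝒯, S ⊂ T → v ∉ S := by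
  by_contra! hcover
  have hsub : (𝒯.filter (· ⊂ T)).Nonempty := by
    obtain ⟨⟨v, hv⟩⟩ := hT.nonempty
    obtain ⟨S, hS, hST, -⟩ := hcover v hv
    exact ⟨S, Finset.mem_filter.mpr ⟨hS, hST⟩⟩
  obtain ⟨S, hSmem, hSmax⟩ := (𝒯.filter (· ⊂ T)).exists_max_image Finset.card hsub
  obtain ⟨hS, hST⟩ := Finset.mem_filter.mp hSmem
  obtain ⟨u, huS⟩ := (h𝒯.1 S hS).1
  obtain ⟨x, hxT, hxS⟩ := Finset.exists_of_ssubset hST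
  obtain ⟨a, -, b, hbT, haS, hbS, hab⟩ :=
    hT.preconnected.exists_adj_mem_notMem_of_induce (hST.subset huS) huS hxT hxS
  obtain ⟨S', hS', hS'T, hbS'⟩ := hcover b hbT
  rcases h𝒯.2 S hS S' hS' (by rintro rfl; exact hbS hbS') with hlt | hgt | ⟨-, hsep⟩
  · have := hSmax S' (Finset.mem_filter.mpr ⟨hS', hS'T⟩)
    exact (Finset.card_lt_card hlt).not_ge this
  · exact hbS (hgt.subset hbS')
  · exact hsep a haS b hbS' hab

theorem subset_of_forall_notMem_of_ssubset (h𝒯 : IsTubing G 𝒯) {T : Finset V}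
    (hT : T ∈ insert Finset.univ 𝒯) {v : V} (hvT : v ∈ T) (hv : ∀ S ∈ 𝒯, S ⊂ T → v ∉ S) :
    ∀ S ∈ insert Finset.univ 𝒯, v ∈ S → T ⊆ S := by
  intro S hS hvS
  rcases Finset.mem_insert.mp hS with rfl | hS
  · exact Finset.subset_univ T
  rcases Finset.mem_insert.mp hT with rfl | hT
  · exact absurd hvS (hv S hS ((Finset.subset_univ S).ssubset_of_ne (h𝒯.1 S hS).2.1))
  obtain rfl | hne := eq_or_ne T S
  · exact subset_rfl
  rcases h𝒯.2 T hT S hS hne with hlt | hgt | ⟨hdisj, -⟩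
  · exact hlt.subset
  · exact absurd hvS (hv S hS hgt)
  · exact absurd hvS (hdisj v hvT)

end IsTubing

theorem weight_sum_of_tube
    (G : SimpleGraph V) (hG : G.Connected)
    (𝒯 : Finset (Finset V)) (h : IsMaxTubing G 𝒯)
    (w : V → ℤ) (hw : IsWeightVector 𝒯 w) :
    ∀ T ∈ insert Finset.univ 𝒯, 2 ≤ T.card →
      ∑ v ∈ T, w v = 3 ^ (T.card - 2) := by
  intro T hT hcard
  obtain ⟨v, hvT, hv⟩ :=
    h.1.exists_mem_forall_notMem_of_ssubset (h.1.induce_connected_of_mem_insert_univ hG hT)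
  have hmin := h.1.subset_of_forall_notMem_of_ssubset hT hvT hv
  rw [← Finset.add_sum_erase T w hvT, (hw v T hT hvT hmin).2 hcard]
  ring
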